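/- arXiv:1112.5895 — 2 statements merged into one kernel-verified Lean document; each statement's English description precedes it below -/
import Mathlib

section
/- Appending additional measurement rows to the sensing matrix cannot increase the MSE of the MAP linear decoder: if Φ₁ ∈ R^{M₁×N} and Φ₂ = [Φ₁; Ψ] ∈ R^{(M₁+M₂)×N}, both of full row rank, then tr(Σ − ΣΦ₂ᵀ(Φ₂ΣΦ₂ᵀ)⁻¹Φ₂Σ) ≤ tr(Σ − ΣΦ₁ᵀ(Φ₁ΣΦ₁ᵀ)⁻¹Φ₁Σ). -/
/-!
Write `Qᵢ = S Φᵢᴴ (Φᵢ S Φᵢᴴ)⁻¹ Φᵢ`, so that the error covariance is `S - Qᵢ S`. Each `Qᵢ` is a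
projection with `Qᵢ S` Hermitian, and since the rows of `Φ₁` are combinations of those of `Φ₂`,
`Q₁ Q₂ = Q₂ Q₁ = Q₁`. Hence `R = Q₂ - Q₁` is a projection with `R Q₁ = 0`, and
`Q₂ S - Q₁ S = R S Rᴴ` is positive semidefinite, so its trace is nonnegative.
-/

open Matrix

namespace Matrix

variable {n m m' : Type*} [Fintype n] [Fintype m]

theorem linearIndependent_row_of_rank_eq_card {K : Type*} [Field K] {A : Matrix m n K}
    (h : A.rank = Fintype.card m) : LinearIndependent K A.row := by
  rw [linearIndependent_iff_card_eq_finrank_span, ← h, rank_eq_finrank_span_row, Set.finrank]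

theorem PosDef.mul_mul_conjTranspose_of_rank_eq_card {K : Type*} [Field K] [PartialOrder K]
    [StarRing K] {S : Matrix n n K} (hS : S.PosDef) {Φ : Matrix m n K}
    (h : Φ.rank = Fintype.card m) : (Φ * S * Φᴴ).PosDef :=
  hS.mul_mul_conjTranspose_same (vecMul_injective_iff.2 (linearIndependent_row_of_rank_eq_card h))

variable {R : Type*} [CommRing R] [StarRing R] [Fintype m'] [DecidableEq m] [DecidableEq m']

/-- For invertible `Φ S Φᴴ`, this is the projection onto the range of `S Φᴴ` along the kernel
of `Φ`, self-adjoint for the inner product given by `S⁻¹`; the error covariance of the linear MAP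
decoder for the measurement matrix `Φ` is `S - obliqueProj S Φ * S`. -/
noncomputable def obliqueProj (S : Matrix n n R) (Φ : Matrix m n R) : Matrix n n R :=
  S * Φᴴ * (Φ * S * Φᴴ)⁻¹ * Φ

variable {S : Matrix n n R} {Φ : Matrix m n R}

theorem obliqueProj_mul_mul_conjTranspose (hΦ : IsUnit (Φ * S * Φᴴ)) :
    obliqueProj S Φ * S * Φᴴ = S * Φᴴ :=
  calc obliqueProj S Φ * S * Φᴴ = S * Φᴴ * ((Φ * S * Φᴴ)⁻¹ * (Φ * S * Φᴴ)) := by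
        simp only [obliqueProj, Matrix.mul_assoc]
    _ = S * Φᴴ := by rw [nonsing_inv_mul _ ((isUnit_iff_isUnit_det _).1 hΦ), Matrix.mul_one]

theorem mul_obliqueProj (hΦ : IsUnit (Φ * S * Φᴴ)) : Φ * obliqueProj S Φ = Φ :=
  calc Φ * obliqueProj S Φ = (Φ * S * Φᴴ) * (Φ * S * Φᴴ)⁻¹ * Φ := by
        simp only [obliqueProj, Matrix.mul_assoc]
    _ = Φ := by rw [mul_nonsing_inv _ ((isUnit_iff_isUnit_det _).1 hΦ), Matrix.one_mul]

theorem isHermitian_obliqueProj_mul (hS : S.IsHermitian) (Φ : Matrix m n R) :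
    (obliqueProj S Φ * S).IsHermitian := by
  simp only [IsHermitian, obliqueProj, conjTranspose_mul, conjTranspose_nonsing_inv,
    conjTranspose_conjTranspose, hS.eq, Matrix.mul_assoc]

variable {Φ₁ : Matrix m n R} {Φ₂ : Matrix m' n R} {E : Matrix m m' R}

theorem obliqueProj_mul_obliqueProj_eq_right (hE : E * Φ₂ = Φ₁)
    (h₂ : IsUnit (Φ₂ * S * Φ₂ᴴ)) : obliqueProj S Φ₂ * obliqueProj S Φ₁ = obliqueProj S Φ₁ := by
  subst hE
  calc obliqueProj S Φ₂ * obliqueProj S (E * Φ₂)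
      = obliqueProj S Φ₂ * S * Φ₂ᴴ * (Eᴴ * (E * Φ₂ * S * (E * Φ₂)ᴴ)⁻¹ * (E * Φ₂)) := by
        simp only [obliqueProj, conjTranspose_mul, Matrix.mul_assoc]
    _ = obliqueProj S (E * Φ₂) := by
        rw [obliqueProj_mul_mul_conjTranspose h₂]
        simp only [obliqueProj, conjTranspose_mul, Matrix.mul_assoc]

theorem obliqueProj_mul_self {Φ : Matrix m n R} (hΦ : IsUnit (Φ * S * Φᴴ)) :
    obliqueProj S Φ * obliqueProj S Φ = obliqueProj S Φ :=
  obliqueProj_mul_obliqueProj_eq_right (Matrix.one_mul Φ) hΦ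

theorem obliqueProj_mul_obliqueProj_eq_left (hE : E * Φ₂ = Φ₁)
    (h₂ : IsUnit (Φ₂ * S * Φ₂ᴴ)) : obliqueProj S Φ₁ * obliqueProj S Φ₂ = obliqueProj S Φ₁ := by
  subst hE
  calc obliqueProj S (E * Φ₂) * obliqueProj S Φ₂
      = S * (E * Φ₂)ᴴ * (E * Φ₂ * S * (E * Φ₂)ᴴ)⁻¹ * E * (Φ₂ * obliqueProj S Φ₂) := by
        simp only [obliqueProj, Matrix.mul_assoc]
    _ = obliqueProj S (E * Φ₂) := by
        rw [mul_obliqueProj h₂]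
        simp only [obliqueProj, Matrix.mul_assoc]

theorem posSemidef_obliqueProj_mul_sub [PartialOrder R] (hS : S.PosSemidef) (hE : E * Φ₂ = Φ₁)
    (h₁ : IsUnit (Φ₁ * S * Φ₁ᴴ)) (h₂ : IsUnit (Φ₂ * S * Φ₂ᴴ)) :
    (obliqueProj S Φ₂ * S - obliqueProj S Φ₁ * S).PosSemidef := by
  set Q₁ := obliqueProj S Φ₁
  set Q₂ := obliqueProj S Φ₂
  have hR₂ : (Q₂ - Q₁) * Q₂ = Q₂ - Q₁ := by
    rw [Matrix.sub_mul, obliqueProj_mul_self h₂,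
      obliqueProj_mul_obliqueProj_eq_left hE h₂]
  have hR₁ : (Q₂ - Q₁) * Q₁ = 0 := by
    rw [Matrix.sub_mul, obliqueProj_mul_obliqueProj_eq_right hE h₂,
      obliqueProj_mul_self h₁, sub_self]
  have hdiff : Q₂ * S - Q₁ * S = (Q₂ - Q₁) * S * (Q₂ - Q₁)ᴴ :=
    calc Q₂ * S - Q₁ * S = (Q₂ - Q₁) * (Q₂ * S) - (Q₂ - Q₁) * (Q₁ * S) := by
          rw [← Matrix.mul_assoc, hR₂, ← Matrix.mul_assoc, hR₁, Matrix.zero_mul, sub_zero,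
            Matrix.sub_mul]
      _ = (Q₂ - Q₁) * ((Q₂ * S)ᴴ - (Q₁ * S)ᴴ) := by
          rw [(isHermitian_obliqueProj_mul hS.isHermitian Φ₂).eq,
            (isHermitian_obliqueProj_mul hS.isHermitian Φ₁).eq, Matrix.mul_sub]
      _ = (Q₂ - Q₁) * S * (Q₂ - Q₁)ᴴ := by
          rw [conjTranspose_mul, conjTranspose_mul, hS.isHermitian.eq, ← Matrix.mul_sub,
            conjTranspose_sub, Matrix.mul_assoc]
  rw [hdiff]
  exact hS.mul_mul_conjTranspose_same _

end Matrix

/-- appending measurement rows cannot increase the MSE (trace of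
the error covariance) of the MAP linear decoder. -/
theorem stmt11 {N M₁ M₂ : ℕ}
    (Sig : Matrix (Fin N) (Fin N) ℝ) (hSig : Sig.PosDef)
    (Φ₁ : Matrix (Fin M₁) (Fin N) ℝ) (Ψ : Matrix (Fin M₂) (Fin N) ℝ)
    (hrank₁ : Φ₁.rank = M₁)
    (hrank₂ : (Matrix.fromRows Φ₁ Ψ).rank = M₁ + M₂) :
    letI Φ₂ := Matrix.fromRows Φ₁ Ψ
    (Sig - Sig * Φ₂ᵀ * (Φ₂ * Sig * Φ₂ᵀ)⁻¹ * Φ₂ * Sig).trace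
      ≤ (Sig - Sig * Φ₁ᵀ * (Φ₁ * Sig * Φ₁ᵀ)⁻¹ * Φ₁ * Sig).trace := by
  have hE : (fromCols 1 0 : Matrix (Fin M₁) (Fin M₁ ⊕ Fin M₂) ℝ) * fromRows Φ₁ Ψ = Φ₁ := by
    rw [fromCols_mul_fromRows, Matrix.one_mul, Matrix.zero_mul, add_zero]
  have hG₁ := hSig.mul_mul_conjTranspose_of_rank_eq_card (Φ := Φ₁) (by simpa using hrank₁)
  have hG₂ :=
    hSig.mul_mul_conjTranspose_of_rank_eq_card (Φ := fromRows Φ₁ Ψ) (by simpa using hrank₂)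
  have hnonneg :=
    (posSemidef_obliqueProj_mul_sub hSig.posSemidef hE hG₁.isUnit hG₂.isUnit).trace_nonneg
  simp only [obliqueProj, conjTranspose_eq_transpose_of_trivial, trace_sub] at hnonneg ⊢
  linarith
end

section
/- Suppose the online adaptive scheme's final decoder chooses among models by the MAP criterion, and the true model is j=1. If the online selection was correct (ĵ=1) and the sensing matrix includes the top M−K principal directions of Σ₁, then the reconstruction error of decoder Δ₁ applied to the combined measurements is at most Σ_{n=M-K+1}^N λ_n^{(1)} in expectation, strictly less than the expected error bound C₀ Σ_{n=M+1}^N λ_n^{(1)} of fully random sensing whenever K < M and C₀ ≥ 1 fails to compensate, i.e., whenever Σ_{n=M-K+1}^N λ_n^{(1)} < C₀ Σ_{n=M+1}^N λ_n^{(1)}. -/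
/-!
With `A = S Φᵀ (Φ S Φᵀ)⁻¹ Φ` the residual is `(1 - A) x`, so the MSE is
`tr ((1 - A) S (1 - A)ᵀ) = tr (S - S Φᵀ (Φ S Φᵀ)⁻¹ Φ S)`. In the eigenbasis `S = B Λ Bᵀ` this equals
`∑ₙ λₙ (1 - λₙ Gₙₙ)` with `Ψ = Φ B` and `G = Ψᵀ (Ψ Λ Ψᵀ)⁻¹ Ψ` positive semidefinite, so each term is
at most `λₙ`. A principal row of `Φ` becomes a unit row `eₙ` of `Ψ`, and `G Λ Ψᵀ = Ψᵀ` then forces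
`λₙ Gₙₙ = 1`: the principal directions contribute nothing.
-/

open MeasureTheory Matrix Finset ProbabilityTheory

namespace Matrix

variable {ι κ : Type*} [Fintype ι]

theorem vecMul_injective_of_rank_eq_card [Fintype κ] {K : Type*} [Field K] {A : Matrix κ ι K}
    (h : A.rank = Fintype.card κ) : Function.Injective A.vecMul :=
  vecMul_injective_iff.mpr <| linearIndependent_iff_card_eq_finrank_span.mpr <| by
    rw [← h, rank_eq_finrank_span_row]; rfl

section CommRing

variable [Fintype κ] {R : Type*} [CommRing R]

theorem transpose_mul_inv_mul_mul_mul_transpose [DecidableEq κ] (Ψ : Matrix κ ι R)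
    (D : Matrix ι ι R) (hC : IsUnit (Ψ * D * Ψᵀ).det) :
    Ψᵀ * (Ψ * D * Ψᵀ)⁻¹ * Ψ * D * Ψᵀ = Ψᵀ := by
  calc Ψᵀ * (Ψ * D * Ψᵀ)⁻¹ * Ψ * D * Ψᵀ = Ψᵀ * ((Ψ * D * Ψᵀ)⁻¹ * (Ψ * D * Ψᵀ)) := by
        simp only [Matrix.mul_assoc]
    _ = Ψᵀ := by rw [nonsing_inv_mul _ hC, Matrix.mul_one]

variable [DecidableEq ι]

theorem one_sub_mul_mul_transpose_one_sub [DecidableEq κ] {S : Matrix ι ι R} (hS : Sᵀ = S)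
    (Φ : Matrix κ ι R) (hC : IsUnit (Φ * S * Φᵀ).det) :
    (1 - S * Φᵀ * (Φ * S * Φᵀ)⁻¹ * Φ) * S * (1 - S * Φᵀ * (Φ * S * Φᵀ)⁻¹ * Φ)ᵀ
      = S - S * Φᵀ * (Φ * S * Φᵀ)⁻¹ * Φ * S := by
  obtain ⟨G, hG⟩ : ∃ G, G = Φᵀ * (Φ * S * Φᵀ)⁻¹ * Φ := ⟨_, rfl⟩
  have hGt : Gᵀ = G := by
    rw [hG]
    simp only [transpose_mul, transpose_nonsing_inv, hS, transpose_transpose, Matrix.mul_assoc]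
  have hGSG : G * S * G = G := by
    calc G * S * G = Φᵀ * (Φ * S * Φᵀ)⁻¹ * Φ * S * Φᵀ * ((Φ * S * Φᵀ)⁻¹ * Φ) := by
          simp only [hG, Matrix.mul_assoc]
      _ = G := by
          rw [transpose_mul_inv_mul_mul_mul_transpose Φ S hC, hG]; simp only [Matrix.mul_assoc]
  have hlhs : S * Φᵀ * (Φ * S * Φᵀ)⁻¹ * Φ = S * G := by simp only [hG, Matrix.mul_assoc]
  rw [hlhs, Matrix.mul_assoc S G S, transpose_sub, transpose_one, transpose_mul, hGt, hS]
  calc (1 - S * G) * S * (1 - G * S) = S - S * G * S - S * G * S + S * (G * S * G) * S := by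
        noncomm_ring
    _ = S - S * (G * S) := by rw [hGSG]; noncomm_ring

theorem trace_sub_mul_transpose_mul_mul {S B : Matrix ι ι R} {d : ι → R} (hB : Bᵀ * B = 1)
    (hS : S = B * diagonal d * Bᵀ) (Φ : Matrix κ ι R) (W : Matrix κ κ R) :
    trace (S - S * Φᵀ * W * Φ * S)
      = ∑ n, d n * (1 - d n * ((Φ * B)ᵀ * W * (Φ * B)) n n) := by
  have hconj : S - S * Φᵀ * W * Φ * S
      = B * (diagonal d - diagonal d * ((Φ * B)ᵀ * W * (Φ * B)) * diagonal d) * Bᵀ := by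
    simp only [hS, transpose_mul, Matrix.mul_sub, Matrix.sub_mul, Matrix.mul_assoc]
  rw [hconj, trace_mul_cycle, hB, Matrix.one_mul]
  simp only [trace, diag_apply, sub_apply, diagonal_mul, mul_diagonal, diagonal_apply_eq]
  exact sum_congr rfl fun n _ => by ring

end CommRing

theorem mul_diag_eq_one_of_row_eq_single {R : Type*} [CommSemiring R] [DecidableEq ι]
    {G : Matrix ι ι R} {Ψ : Matrix κ ι R} {d : ι → R} (h : G * diagonal d * Ψᵀ = Ψᵀ) {r : κ}
    {n : ι} (hr : Ψ r = Pi.single n 1) : d n * G n n = 1 := by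
  have hnr := congrFun (congrFun h n) r
  rw [mul_apply] at hnr
  simp only [mul_diagonal, transpose_apply, hr] at hnr
  simpa [Pi.single_apply, mul_comm] using hnr

theorem mul_row_eq_single_of_row_eq_col {R : Type*} [CommSemiring R] [DecidableEq ι]
    {Φ : Matrix κ ι R} {B : Matrix ι ι R} (hB : Bᵀ * B = 1) {r : κ} {n : ι}
    (hr : ∀ i, Φ r i = B i n) : (Φ * B) r = Pi.single n 1 := by
  ext j
  have hnj := congrFun (congrFun hB n) j
  simp only [mul_apply, transpose_apply] at hnj
  simp only [mul_apply, hr, hnj, one_apply, Pi.single_apply, eq_comm]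

theorem PosDef.pos_of_eq_mul_diagonal_mul_transpose [DecidableEq ι] {S B : Matrix ι ι ℝ}
    {d : ι → ℝ} (hS : S.PosDef) (hB : Bᵀ * B = 1) (hSd : S = B * diagonal d * Bᵀ) (n : ι) :
    0 < d n := by
  have hconj : Bᵀ * S * B = diagonal d := by
    rw [hSd, ← Matrix.mul_assoc, ← Matrix.mul_assoc, hB, Matrix.one_mul, Matrix.mul_assoc, hB,
      Matrix.mul_one]
  have hD := hS.conjTranspose_mul_mul_same (B := B)
    (Function.LeftInverse.injective (g := (Bᵀ *ᵥ ·)) fun v => by simp [hB])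
  rw [conjTranspose_eq_transpose_of_trivial, hconj, posDef_diagonal_iff] at hD
  exact hD n

end Matrix

theorem integral_sum_mulVec_sq_eq_trace {ι κ : Type*} [Fintype ι] [Fintype κ]
    {μ : Measure (ι → ℝ)} {S : Matrix ι ι ℝ}
    (hint : ∀ i j, Integrable (fun x : ι → ℝ => x i * x j) μ)
    (hcov : ∀ i j, ∫ x, x i * x j ∂μ = S i j) (Q : Matrix κ ι ℝ) :
    ∫ x, ∑ k, (Q *ᵥ x) k ^ 2 ∂μ = trace (Q * S * Qᵀ) := by
  have hexpand : ∀ x : ι → ℝ,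
      ∑ k, (Q *ᵥ x) k ^ 2 = ∑ k, ∑ i, ∑ j, Q k i * Q k j * (x i * x j) := fun x =>
    sum_congr rfl fun k _ => by
      simp only [mulVec, dotProduct, sq, sum_mul_sum]
      exact sum_congr rfl fun i _ => sum_congr rfl fun j _ => by ring
  have hint' : ∀ k i j, Integrable (fun x : ι → ℝ => Q k i * Q k j * (x i * x j)) μ :=
    fun k i j => (hint i j).const_mul _
  simp_rw [hexpand]
  rw [integral_finsetSum _ fun k _ =>
    integrable_finsetSum _ fun i _ => integrable_finsetSum _ fun j _ => hint' k i j]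
  simp only [trace, diag_apply, mul_apply, transpose_apply, sum_mul]
  refine sum_congr rfl fun k _ => ?_
  rw [integral_finsetSum _ fun i _ => integrable_finsetSum _ fun j _ => hint' k i j, sum_comm]
  refine sum_congr rfl fun i _ => ?_
  rw [integral_finsetSum _ fun j _ => hint' k i j]
  refine sum_congr rfl fun j _ => ?_
  rw [integral_const_mul, hcov]
  ring

theorem integral_sum_sq_sub_mulVec_eq {ι κ : Type*} [Fintype ι] [Fintype κ] [DecidableEq ι]
    [DecidableEq κ] {μ : Measure (ι → ℝ)} {S B : Matrix ι ι ℝ} {d : ι → ℝ}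
    (hint : ∀ i j, Integrable (fun x : ι → ℝ => x i * x j) μ)
    (hcov : ∀ i j, ∫ x, x i * x j ∂μ = S i j) (hB : Bᵀ * B = 1)
    (hSd : S = B * diagonal d * Bᵀ) (Φ : Matrix κ ι ℝ) (hC : IsUnit (Φ * S * Φᵀ).det) :
    ∫ x, ∑ i, (x i - ((S * Φᵀ * (Φ * S * Φᵀ)⁻¹ * Φ) *ᵥ x) i) ^ 2 ∂μ
      = ∑ n, d n * (1 - d n * ((Φ * B)ᵀ * (Φ * S * Φᵀ)⁻¹ * (Φ * B)) n n) := by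
  have hS : Sᵀ = S := by
    simp only [hSd, transpose_mul, diagonal_transpose, transpose_transpose, Matrix.mul_assoc]
  calc ∫ x, ∑ i, (x i - ((S * Φᵀ * (Φ * S * Φᵀ)⁻¹ * Φ) *ᵥ x) i) ^ 2 ∂μ
      = ∫ x, ∑ i, ((1 - S * Φᵀ * (Φ * S * Φᵀ)⁻¹ * Φ) *ᵥ x) i ^ 2 ∂μ := by
        simp only [sub_mulVec, one_mulVec, Pi.sub_apply]
    _ = trace (S - S * Φᵀ * (Φ * S * Φᵀ)⁻¹ * Φ * S) := by
        rw [integral_sum_mulVec_sq_eq_trace hint hcov, one_sub_mul_mul_transpose_one_sub hS Φ hC]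
    _ = _ := trace_sub_mul_transpose_mul_mul hB hSd Φ _

theorem sum_mul_one_sub_le_sum_filter {ι : Type*} [Fintype ι] {w t : ι → ℝ} (p : ι → Prop)
    [DecidablePred p] (hwt : ∀ n, 0 ≤ w n * t n) (ht : ∀ n, ¬ p n → t n = 1) :
    ∑ n, w n * (1 - t n) ≤ ∑ n ∈ univ.filter p, w n := by
  rw [sum_filter]
  refine sum_le_sum fun n _ => ?_
  split_ifs with hn
  · linarith [hwt n]
  · rw [ht n hn, sub_self, mul_zero]

theorem stmt19_general {N M K : ℕ} (hMN : M ≤ N)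
    (μ : Measure (Fin N → ℝ))
    (S₁ B : Matrix (Fin N) (Fin N) ℝ) (lam : Fin N → ℝ)
    (hB : Bᵀ * B = 1)
    (hS₁ : S₁ = B * Matrix.diagonal lam * Bᵀ)
    (hS₁PD : S₁.PosDef)
    (hint : ∀ i j, Integrable (fun x : Fin N → ℝ => x i * x j) μ)
    (hcov : ∀ i j, ∫ x, x i * x j ∂μ = S₁ i j)
    (ΦK : Matrix (Fin K) (Fin N) ℝ)
    (ΦP : Matrix (Fin (M - K)) (Fin N) ℝ)
    (hPhiP : ∀ (m : Fin (M - K)) (i : Fin N),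
      ΦP m i = B i (Fin.castLE (le_trans (Nat.sub_le M K) hMN) m))
    (hrank : (Matrix.fromRows ΦK ΦP).rank = K + (M - K))
    (C₀ : ℝ) :
    letI Φ := Matrix.fromRows ΦK ΦP
    letI MSE := ∫ x, (∑ i, (x i - (S₁ * Φᵀ * (Φ * S₁ * Φᵀ)⁻¹ * Φ).mulVec x i) ^ 2) ∂μ
    (MSE ≤ ∑ n ∈ Finset.univ.filter (fun n : Fin N => M - K ≤ (n : ℕ)), lam n) ∧
    ((∑ n ∈ Finset.univ.filter (fun n : Fin N => M - K ≤ (n : ℕ)), lam n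
        < C₀ * ∑ n ∈ Finset.univ.filter (fun n : Fin N => M ≤ (n : ℕ)), lam n) →
      MSE < C₀ * ∑ n ∈ Finset.univ.filter (fun n : Fin N => M ≤ (n : ℕ)), lam n) := by
  set Φ := fromRows ΦK ΦP
  set Ψ := Φ * B
  have hC : (Φ * S₁ * Φᵀ).PosDef := by
    simpa [conjTranspose_eq_transpose_of_trivial] using
      hS₁PD.mul_mul_conjTranspose_same (vecMul_injective_of_rank_eq_card (by simpa using hrank))
  have hCdet : IsUnit (Φ * S₁ * Φᵀ).det := (isUnit_iff_isUnit_det _).mp hC.isUnit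
  have hCΨ : Φ * S₁ * Φᵀ = Ψ * diagonal lam * Ψᵀ := by
    simp only [Ψ, hS₁, transpose_mul, Matrix.mul_assoc]
  have hG : ∀ n, 0 ≤ (Ψᵀ * (Φ * S₁ * Φᵀ)⁻¹ * Ψ) n n := fun n => by
    simpa [conjTranspose_eq_transpose_of_trivial] using
      (hC.inv.posSemidef.conjTranspose_mul_mul_same Ψ).diag_nonneg (i := n)
  have hprincipal : ∀ n : Fin N, ¬ M - K ≤ n → lam n * (Ψᵀ * (Φ * S₁ * Φᵀ)⁻¹ * Ψ) n n = 1 := by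
    intro n hn
    refine mul_diag_eq_one_of_row_eq_single (Ψ := Ψ) (r := Sum.inr ⟨n, by omega⟩) ?_
      (mul_row_eq_single_of_row_eq_col hB fun i => hPhiP _ i)
    rw [hCΨ]
    exact transpose_mul_inv_mul_mul_mul_transpose _ _ (hCΨ ▸ hCdet)
  have hlam := hS₁PD.pos_of_eq_mul_diagonal_mul_transpose hB hS₁
  have hbound := (integral_sum_sq_sub_mulVec_eq hint hcov hB hS₁ Φ hCdet).trans_le <|
    sum_mul_one_sub_le_sum_filter _
      (fun n => mul_nonneg (hlam n).le (mul_nonneg (hlam n).le (hG n))) hprincipal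
  exact ⟨hbound, hbound.trans_lt⟩

/-- for `x ~ N(0, Σ₁)` and a sensing matrix stacking `K` arbitrary
(random) rows with the top `M−K` principal directions of `Σ₁` (full row rank),
the MSE of the MAP decoder `Δ₁` is at most `Σ_{n=M-K+1}^N λ_n`, and is strictly
less than the fully-random-sensing bound `C₀ Σ_{n=M+1}^N λ_n` whenever
`Σ_{n=M-K+1}^N λ_n < C₀ Σ_{n=M+1}^N λ_n`. -/
theorem stmt19 {N M K : ℕ} (hK : K ≤ M) (hMN : M ≤ N)
    (μ : Measure (Fin N → ℝ)) [IsProbabilityMeasure μ]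
    (S₁ B : Matrix (Fin N) (Fin N) ℝ) (lam : Fin N → ℝ)
    (hB : Bᵀ * B = 1)
    (hS₁ : S₁ = B * Matrix.diagonal lam * Bᵀ)
    (hS₁PD : S₁.PosDef)
    (hsort : ∀ i j : Fin N, i ≤ j → lam j ≤ lam i)
    (hgauss : ∀ a : Fin N → ℝ,
      Measure.map (fun x => a ⬝ᵥ x) μ = gaussianReal 0 (a ⬝ᵥ S₁.mulVec a).toNNReal)
    (hint : ∀ i j, Integrable (fun x : Fin N → ℝ => x i * x j) μ)
    (hmean : ∀ i, ∫ x, x i ∂μ = 0)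
    (hcov : ∀ i j, ∫ x, x i * x j ∂μ = S₁ i j)
    (ΦK : Matrix (Fin K) (Fin N) ℝ)
    (ΦP : Matrix (Fin (M - K)) (Fin N) ℝ)
    (hPhiP : ∀ (m : Fin (M - K)) (i : Fin N),
      ΦP m i = B i (Fin.castLE (le_trans (Nat.sub_le M K) hMN) m))
    (hrank : (Matrix.fromRows ΦK ΦP).rank = K + (M - K))
    (C₀ : ℝ) (hC₀ : 1 ≤ C₀) :
    letI Φ := Matrix.fromRows ΦK ΦP
    letI MSE := ∫ x, (∑ i, (x i - (S₁ * Φᵀ * (Φ * S₁ * Φᵀ)⁻¹ * Φ).mulVec x i) ^ 2) ∂μ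
    (MSE ≤ ∑ n ∈ Finset.univ.filter (fun n : Fin N => M - K ≤ (n : ℕ)), lam n) ∧
    ((∑ n ∈ Finset.univ.filter (fun n : Fin N => M - K ≤ (n : ℕ)), lam n
        < C₀ * ∑ n ∈ Finset.univ.filter (fun n : Fin N => M ≤ (n : ℕ)), lam n) →
      MSE < C₀ * ∑ n ∈ Finset.univ.filter (fun n : Fin N => M ≤ (n : ℕ)), lam n) :=
  stmt19_general hMN μ S₁ B lam hB hS₁ hS₁PD hint hcov ΦK ΦP hPhiP hrank C₀
end
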